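/- arXiv:0907.4188 — 3 statements merged into one kernel-verified Lean document; each statement's English description precedes it below -/
import Mathlib

section
/- Let $\mu$ be a finite Borel measure on $\mathbb{C}$, let $a>0$ and $1<p<\infty$, and set $p'=p/(p-1)$. Then there is a constant $C>0$ depending only on $a$ and $p$ such that for every $x\in\mathbb{C}$, $\int_0^\infty \varepsilon_{\mu,a}(x,t)^{p'-1}\,\frac{dt}{t} \;\leq\; C \int_0^\infty \Bigl(\frac{\mu(B(x,r))}{r}\Bigr)^{p'-1}\,\frac{dr}{r}$. -/
open MeasureTheory Metric Set ENNReal NNReal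

/-- The smoothed density `ε_{μ,a}(x,t) = (1/t) ∫ ψ_a((y-x)/t) dμ(y)`,
where `ψ_a(x) = 1/(|x|^{1+a} + 1)`. -/
noncomputable def epsMu (μ : Measure ℂ) (a : ℝ) (x : ℂ) (t : ℝ) : ℝ :=
  (1 / t) * ∫ y, 1 / (‖(y - x) / (t : ℂ)‖ ^ (1 + a) + 1) ∂μ

lemma key_tsum {q : ℝ} (hq : 0 < q) {ρ : ℝ≥0∞} (hρ0 : ρ ≠ 0) (hρ1 : ρ < 1) (b : ℕ → ℝ≥0∞) :
    (∑' k, ρ ^ k * b k) ^ q ≤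
      ((1 - ρ ^ (1/2 : ℝ))⁻¹) ^ q * ∑' k, (ρ ^ (q/2 : ℝ)) ^ k * b k ^ q := by
  set τ := ρ ^ (1/2 : ℝ) with hτ
  set σ := ρ ^ (q/2 : ℝ) with hσ
  have hρtop : ρ ≠ ∞ := hρ1.trans_le le_top |>.ne
  have hτq : τ ^ q = σ := by
    rw [hτ, hσ, ← ENNReal.rpow_mul]; ring_nf
  have hmul : ∀ k : ℕ, (τ ^ k) ^ q = σ ^ k := by
    intro k
    rw [← ENNReal.rpow_natCast τ k, ← ENNReal.rpow_mul, mul_comm, ENNReal.rpow_mul,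
      hτq, ENNReal.rpow_natCast]
  set M := (∑' k, σ ^ k * b k ^ q) ^ (1/q) with hM
  have hMq : M ^ q = ∑' k, σ ^ k * b k ^ q := by
    rw [hM, ← ENNReal.rpow_mul, one_div, inv_mul_cancel₀ hq.ne', ENNReal.rpow_one]
  have step1 : ∀ k, τ ^ k * b k ≤ M := by
    intro k
    have h1 : (τ ^ k * b k) ^ q = σ ^ k * b k ^ q := by
      rw [ENNReal.mul_rpow_of_nonneg _ _ hq.le, hmul]
    have h2 : (τ ^ k * b k) ^ q ≤ M ^ q := by
      rw [h1, hMq]; exact ENNReal.le_tsum k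
    have := ENNReal.rpow_le_rpow h2 (by positivity : (0:ℝ) ≤ 1/q)
    rwa [← ENNReal.rpow_mul, ← ENNReal.rpow_mul, mul_one_div, div_self hq.ne',
      ENNReal.rpow_one, ENNReal.rpow_one] at this
  have hρττ : ρ = τ * τ := by
    rw [hτ, ← ENNReal.rpow_add _ _ hρ0 hρtop]; norm_num
  have step2 : (∑' k, ρ ^ k * b k) ≤ (1 - τ)⁻¹ * M := by
    calc (∑' k, ρ ^ k * b k) ≤ ∑' k, τ ^ k * M := by
          refine ENNReal.tsum_le_tsum fun k => ?_
          rw [hρττ, mul_pow, mul_assoc]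
          exact mul_le_mul_right (step1 k) _
      _ = (1 - τ)⁻¹ * M := by rw [ENNReal.tsum_mul_right, ENNReal.tsum_geometric]
  calc (∑' k, ρ ^ k * b k) ^ q ≤ ((1 - τ)⁻¹ * M) ^ q := ENNReal.rpow_le_rpow step2 hq.le
    _ = ((1 - τ)⁻¹) ^ q * M ^ q := ENNReal.mul_rpow_of_nonneg _ _ hq.le
    _ = ((1 - τ)⁻¹) ^ q * ∑' k, σ ^ k * b k ^ q := by rw [hMq]

lemma lintegral_Ioi_comp_mul_left {h : ℝ → ℝ≥0∞} (hm : Measurable h) {c : ℝ} (hc : 0 < c) :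
    ∫⁻ t in Ioi (0:ℝ), h (c * t) = ENNReal.ofReal c⁻¹ * ∫⁻ t in Ioi (0:ℝ), h t := by
  have hpre : (fun t : ℝ => c * t) ⁻¹' (Ioi 0) = Ioi 0 := by
    ext t; simp [mul_pos_iff_of_pos_left, hc]
  have hmap : (volume.restrict (Ioi (0:ℝ))).map (fun t => c * t)
      = ENNReal.ofReal c⁻¹ • volume.restrict (Ioi (0:ℝ)) := by
    rw [← hpre, ← Measure.restrict_map (measurable_const_mul c) measurableSet_Ioi,
      Real.map_volume_mul_left hc.ne', abs_of_pos (inv_pos.2 hc), Measure.restrict_smul, hpre]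
  rw [← lintegral_map hm (measurable_const_mul c), hmap, lintegral_smul_measure, smul_eq_mul]

lemma psi_bound (a : ℝ) (ha : 0 < a) (X : ℝ) (hX : 0 ≤ X) (k : ℕ)
    (hk : ∀ j : ℕ, j + 1 = k → (2:ℝ)^j < X) :
    1/(X^(1+a)+1) ≤ (2:ℝ)^(1+a) * ((2:ℝ)^(-(1+a)))^k := by
  have h1a : (0:ℝ) ≤ 1 + a := by linarith
  match k with
  | 0 =>
    have hX1 : (0:ℝ) ≤ X ^ (1+a) := Real.rpow_nonneg hX _
    have : 1/(X^(1+a)+1) ≤ 1 := by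
      rw [div_le_one (by linarith)]; linarith
    refine this.trans ?_
    rw [pow_zero, mul_one]
    calc (1:ℝ) = (2:ℝ)^(0:ℝ) := (Real.rpow_zero 2).symm
      _ ≤ (2:ℝ)^(1+a) := Real.rpow_le_rpow_of_exponent_le one_le_two h1a
  | (j+1) =>
    have h2j : (2:ℝ)^j < X := hk j rfl
    have h2jpos : (0:ℝ) < (2:ℝ)^j := by positivity
    have hbase : ((2:ℝ)^j)^(1+a) ≤ X^(1+a) :=
      Real.rpow_le_rpow h2jpos.le h2j.le h1a
    have hpos : (0:ℝ) < ((2:ℝ)^j)^(1+a) := Real.rpow_pos_of_pos h2jpos _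
    have step : 1/(X^(1+a)+1) ≤ 1/(((2:ℝ)^j)^(1+a)) := by
      apply one_div_le_one_div_of_le hpos; linarith
    refine step.trans (le_of_eq ?_)
    rw [← Real.rpow_natCast (2:ℝ) j, ← Real.rpow_mul (by norm_num : (0:ℝ) ≤ 2),
      ← Real.rpow_natCast ((2:ℝ)^(-(1+a))) (j+1),
      ← Real.rpow_mul (by norm_num : (0:ℝ) ≤ 2),
      ← Real.rpow_add (by norm_num : (0:ℝ) < 2),
      one_div, ← Real.rpow_neg (by norm_num : (0:ℝ) ≤ 2)]
    congr 1
    push_cast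
    ring

lemma epsA (a : ℝ) (ha : 0 < a) (μ : Measure ℂ) [IsFiniteMeasure μ] (x : ℂ) {t : ℝ}
    (ht : 0 < t) :
    ENNReal.ofReal (epsMu μ a x t) ≤
      ∑' k : ℕ, ENNReal.ofReal ((2:ℝ)^(1+a)) * (ENNReal.ofReal ((2:ℝ)^(-a)))^k *
        (μ (closedBall x ((2:ℝ)^k * t)) / ENNReal.ofReal ((2:ℝ)^k * t)) := by
  classical
  set g : ℂ → ℝ := fun y => 1 / (‖(y - x) / (t : ℂ)‖ ^ (1 + a) + 1) with hg
  have hg0 : ∀ y, 0 ≤ g y := fun y => by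
    have : (0:ℝ) ≤ ‖(y - x) / (t : ℂ)‖ ^ (1 + a) := Real.rpow_nonneg (norm_nonneg _) _
    positivity
  by_cases hint : Integrable g μ
  swap
  · rw [epsMu, integral_undef hint, mul_zero, ENNReal.ofReal_zero]
    exact zero_le
  set W : ℕ → ℝ≥0∞ := fun k => ENNReal.ofReal ((2:ℝ)^(1+a) * ((2:ℝ)^(-(1+a)))^k) with hW
  -- pointwise bound
  have hpt : ∀ y, ENNReal.ofReal (g y) ≤
      ∑' k : ℕ, W k * (closedBall x ((2:ℝ)^k * t)).indicator (1 : ℂ → ℝ≥0∞) y := by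
    intro y
    have hex : ∃ k : ℕ, dist y x ≤ 2^k * t := by
      obtain ⟨k, hk⟩ := pow_unbounded_of_one_lt (dist y x / t) (one_lt_two (α := ℝ))
      exact ⟨k, by rw [← div_le_iff₀ ht]; exact hk.le⟩
    set k := Nat.find hex with hkdef
    have hk : dist y x ≤ 2^k * t := Nat.find_spec hex
    have hmem : y ∈ closedBall x ((2:ℝ)^k * t) := mem_closedBall.2 hk
    have hind : (closedBall x ((2:ℝ)^k * t)).indicator (1 : ℂ → ℝ≥0∞) y = 1 := by
      rw [Set.indicator_of_mem hmem]; rfl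
    have key : ENNReal.ofReal (g y) ≤ W k := by
      apply ENNReal.ofReal_le_ofReal
      have hnorm : ‖(y - x) / (t : ℂ)‖ = dist y x / t := by
        rw [norm_div, Complex.norm_real, Real.norm_eq_abs, abs_of_pos ht, dist_eq_norm]
      rw [hg]
      simp only [hnorm]
      apply psi_bound a ha _ (by positivity)
      intro j hj
      have hnot : ¬ dist y x ≤ 2^j * t := Nat.find_min hex (by omega)
      rw [lt_div_iff₀ ht]
      linarith [not_le.1 hnot]
    calc ENNReal.ofReal (g y) ≤ W k * (closedBall x ((2:ℝ)^k * t)).indicator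
          (1 : ℂ → ℝ≥0∞) y := by rw [hind, mul_one]; exact key
      _ ≤ _ := ENNReal.le_tsum k
  -- lintegral bound
  have hlin : ∫⁻ y, ENNReal.ofReal (g y) ∂μ ≤
      ∑' k : ℕ, W k * μ (closedBall x ((2:ℝ)^k * t)) := by
    calc ∫⁻ y, ENNReal.ofReal (g y) ∂μ
        ≤ ∫⁻ y, ∑' k : ℕ, W k * (closedBall x ((2:ℝ)^k * t)).indicator
            (1 : ℂ → ℝ≥0∞) y ∂μ := lintegral_mono hpt
      _ = ∑' k : ℕ, ∫⁻ y, W k * (closedBall x ((2:ℝ)^k * t)).indicator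
            (1 : ℂ → ℝ≥0∞) y ∂μ := by
          apply lintegral_tsum
          intro k
          exact ((measurable_const.indicator measurableSet_closedBall).const_mul _).aemeasurable
      _ = ∑' k : ℕ, W k * μ (closedBall x ((2:ℝ)^k * t)) := by
          congr 1; ext k
          rw [lintegral_const_mul' _ _ ENNReal.ofReal_ne_top,
            lintegral_indicator_one measurableSet_closedBall]
  -- assemble
  have heq : ENNReal.ofReal (epsMu μ a x t) =
      ENNReal.ofReal (1/t) * ∫⁻ y, ENNReal.ofReal (g y) ∂μ := by
    rw [epsMu, ENNReal.ofReal_mul (by positivity),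
      ofReal_integral_eq_lintegral_ofReal hint (ae_of_all _ hg0)]
  rw [heq]
  calc ENNReal.ofReal (1/t) * ∫⁻ y, ENNReal.ofReal (g y) ∂μ
      ≤ ENNReal.ofReal (1/t) * ∑' k : ℕ, W k * μ (closedBall x ((2:ℝ)^k * t)) :=
        mul_le_mul_right hlin _
    _ = ∑' k : ℕ, ENNReal.ofReal (1/t) * (W k * μ (closedBall x ((2:ℝ)^k * t))) :=
        ENNReal.tsum_mul_left.symm
    _ ≤ _ := by
        apply ENNReal.tsum_le_tsum
        intro k
        apply le_of_eq
        have h2k : (0:ℝ) < (2:ℝ)^k := by positivity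
        have h2kt : ENNReal.ofReal ((2:ℝ)^k * t)
            = ENNReal.ofReal ((2:ℝ)^k) * ENNReal.ofReal t := ENNReal.ofReal_mul h2k.le
        have hWk : W k * ENNReal.ofReal ((2:ℝ)^k)
            = ENNReal.ofReal ((2:ℝ)^(1+a)) * (ENNReal.ofReal ((2:ℝ)^(-a)))^k := by
          rw [hW]
          rw [← ENNReal.ofReal_pow (by positivity), ← ENNReal.ofReal_mul (by positivity),
            ← ENNReal.ofReal_mul (by positivity)]
          congr 1
          rw [mul_assoc, ← mul_pow]
          congr 2
          rw [show ((2:ℝ)^(-(1+a)) * 2) = (2:ℝ)^(-(1+a)) * (2:ℝ)^(1:ℝ) by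
              rw [Real.rpow_one], ← Real.rpow_add (by norm_num : (0:ℝ) < 2)]
          congr 1
          ring
        have he0 : ENNReal.ofReal ((2:ℝ)^k) ≠ 0 := (ENNReal.ofReal_pos.2 h2k).ne'
        have hetop : ENNReal.ofReal ((2:ℝ)^k) ≠ ∞ := ENNReal.ofReal_ne_top
        rw [ENNReal.div_eq_inv_mul, h2kt, ENNReal.mul_inv (Or.inl he0) (Or.inl hetop),
          one_div, ENNReal.ofReal_inv_of_pos ht, ← hWk]
        rw [show W k * ENNReal.ofReal ((2:ℝ)^k) *
              ((ENNReal.ofReal ((2:ℝ)^k))⁻¹ * (ENNReal.ofReal t)⁻¹ *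
                μ (closedBall x ((2:ℝ)^k * t)))
            = (ENNReal.ofReal ((2:ℝ)^k) * (ENNReal.ofReal ((2:ℝ)^k))⁻¹) *
              ((ENNReal.ofReal t)⁻¹ * (W k * μ (closedBall x ((2:ℝ)^k * t)))) from by ring,
          ENNReal.mul_inv_cancel he0 hetop, one_mul]

/-- For a finite Borel measure `μ` on `ℂ`, `a > 0`, `1 < p < ∞`,
`p' = p/(p-1)`, there is `C > 0` depending only on `a, p` such that for all `x`,
`∫₀^∞ ε_{μ,a}(x,t)^{p'-1} dt/t ≤ C ∫₀^∞ (μ(B(x,r))/r)^{p'-1} dr/r`. -/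
theorem stmt1 (a p : ℝ) (ha : 0 < a) (hp : 1 < p) :
    ∃ C : ℝ, 0 < C ∧ ∀ (μ : Measure ℂ), IsFiniteMeasure μ → ∀ x : ℂ,
      ∫⁻ t in Set.Ioi (0 : ℝ), ENNReal.ofReal (epsMu μ a x t ^ (p / (p - 1) - 1) / t)
        ≤ ENNReal.ofReal C *
            ∫⁻ r in Set.Ioi (0 : ℝ),
              (μ (Metric.closedBall x r) / ENNReal.ofReal r) ^ (p / (p - 1) - 1) /
                ENNReal.ofReal r := by
  have hp1 : (0:ℝ) < p - 1 := by linarith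
  set q : ℝ := p / (p - 1) - 1 with hqdef
  have hq : 0 < q := by
    rw [hqdef, div_sub_one hp1.ne']
    have : p - (p - 1) = 1 := by ring
    rw [this]
    positivity
  set ρ : ℝ≥0∞ := ENNReal.ofReal ((2:ℝ)^(-a)) with hρdef
  have hρ0 : ρ ≠ 0 := (ENNReal.ofReal_pos.2 (Real.rpow_pos_of_pos two_pos _)).ne'
  have hρ1 : ρ < 1 :=
    ENNReal.ofReal_lt_one.2 (Real.rpow_lt_one_of_one_lt_of_neg one_lt_two (by linarith))
  set τ : ℝ≥0∞ := ρ ^ (1/2 : ℝ) with hτdef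
  set σ : ℝ≥0∞ := ρ ^ (q/2 : ℝ) with hσdef
  set C₂ : ℝ≥0∞ := ENNReal.ofReal ((2:ℝ)^(1+a)) with hC₂def
  set D : ℝ≥0∞ := ((1 - τ)⁻¹) ^ q with hDdef
  have hτ1 : τ < 1 := ENNReal.rpow_lt_one hρ1 (by norm_num)
  have hσ1 : σ < 1 := ENNReal.rpow_lt_one hρ1 (by positivity)
  have hC₂q : C₂ ^ q ≠ ∞ := ENNReal.rpow_ne_top_of_nonneg hq.le ENNReal.ofReal_ne_top
  have hD : D ≠ ∞ := by
    apply ENNReal.rpow_ne_top_of_nonneg hq.le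
    exact ENNReal.inv_ne_top.2 (tsub_pos_of_lt hτ1).ne'
  set K : ℝ≥0∞ := C₂ ^ q * D * (1 - σ)⁻¹ with hKdef
  have hKtop : K ≠ ∞ :=
    ENNReal.mul_ne_top (ENNReal.mul_ne_top hC₂q hD)
      (ENNReal.inv_ne_top.2 (tsub_pos_of_lt hσ1).ne')
  refine ⟨K.toReal + 1, by positivity, ?_⟩
  intro μ hμfin x
  haveI := hμfin
  have hKC : K ≤ ENNReal.ofReal (K.toReal + 1) := by
    rw [ENNReal.ofReal_add ENNReal.toReal_nonneg zero_le_one, ENNReal.ofReal_toReal hKtop]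
    exact le_self_add
  set h : ℝ → ℝ≥0∞ :=
    fun r => (μ (closedBall x r) / ENNReal.ofReal r) ^ q / ENNReal.ofReal r with hhdef
  have hmono : Monotone fun r => μ (closedBall x r) :=
    fun r s hrs => measure_mono (closedBall_subset_closedBall hrs)
  have hhm : Measurable h := by
    apply Measurable.div
    · exact (hmono.measurable.div ENNReal.measurable_ofReal).pow measurable_const
    · exact ENNReal.measurable_ofReal
  set I : ℝ≥0∞ := ∫⁻ r in Ioi (0:ℝ), h r with hIdef
  show ∫⁻ t in Ioi (0:ℝ), ENNReal.ofReal (epsMu μ a x t ^ q / t)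
      ≤ ENNReal.ofReal (K.toReal + 1) * I
  -- pointwise bound
  have hptB : ∀ t ∈ Ioi (0:ℝ), ENNReal.ofReal (epsMu μ a x t ^ q / t)
      ≤ ∑' k : ℕ, (C₂ ^ q * D * σ ^ k * ENNReal.ofReal ((2:ℝ)^k)) * h ((2:ℝ)^k * t) := by
    intro t ht
    rw [mem_Ioi] at ht
    have heps0 : 0 ≤ epsMu μ a x t := by
      apply mul_nonneg (by positivity)
      apply integral_nonneg
      intro y
      have : (0:ℝ) ≤ ‖(y - x) / (t:ℂ)‖ ^ (1+a) := Real.rpow_nonneg (norm_nonneg _) _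
      positivity
    set T : ℝ≥0∞ := ENNReal.ofReal t with hT
    have hofr : ENNReal.ofReal (epsMu μ a x t ^ q / t)
        = (ENNReal.ofReal (epsMu μ a x t)) ^ q * T⁻¹ := by
      rw [div_eq_mul_inv, ENNReal.ofReal_mul (Real.rpow_nonneg heps0 q),
        ENNReal.ofReal_rpow_of_nonneg heps0 hq.le, hT, ENNReal.ofReal_inv_of_pos ht]
    set b : ℕ → ℝ≥0∞ :=
      fun k => μ (closedBall x ((2:ℝ)^k * t)) / ENNReal.ofReal ((2:ℝ)^k * t) with hbdef
    have hA : ENNReal.ofReal (epsMu μ a x t) ≤ C₂ * ∑' k, ρ ^ k * b k := by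
      rw [← ENNReal.tsum_mul_left]
      have := epsA a ha μ x ht
      simpa only [mul_assoc] using this
    have hB : (ENNReal.ofReal (epsMu μ a x t)) ^ q ≤ C₂ ^ q * (D * ∑' k, σ ^ k * b k ^ q) := by
      calc (ENNReal.ofReal (epsMu μ a x t)) ^ q
          ≤ (C₂ * ∑' k, ρ ^ k * b k) ^ q := ENNReal.rpow_le_rpow hA hq.le
        _ = C₂ ^ q * (∑' k, ρ ^ k * b k) ^ q := ENNReal.mul_rpow_of_nonneg _ _ hq.le
        _ ≤ C₂ ^ q * (D * ∑' k, σ ^ k * b k ^ q) :=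
            mul_le_mul_right (key_tsum hq hρ0 hρ1 b) _
    rw [hofr]
    refine le_trans (mul_le_mul_left hB _) (le_of_eq ?_)
    have hterm : ∀ k : ℕ, (C₂ ^ q * D * σ ^ k * ENNReal.ofReal ((2:ℝ)^k)) * h ((2:ℝ)^k * t)
        = (C₂ ^ q * D) * (σ ^ k * b k ^ q * T⁻¹) := by
      intro k
      have h2k : (0:ℝ) < (2:ℝ)^k := by positivity
      have he0 : ENNReal.ofReal ((2:ℝ)^k) ≠ 0 := (ENNReal.ofReal_pos.2 h2k).ne'
      have hetop : ENNReal.ofReal ((2:ℝ)^k) ≠ ∞ := ENNReal.ofReal_ne_top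
      have hh2kt : h ((2:ℝ)^k * t)
          = b k ^ q * ((ENNReal.ofReal ((2:ℝ)^k))⁻¹ * T⁻¹) := by
        rw [hhdef, hbdef]
        simp only []
        rw [ENNReal.div_eq_inv_mul, ENNReal.ofReal_mul h2k.le, hT,
          ENNReal.mul_inv (Or.inl he0) (Or.inl hetop)]
        ring
      rw [hh2kt]
      rw [show (C₂ ^ q * D * σ ^ k * ENNReal.ofReal ((2:ℝ)^k)) *
            (b k ^ q * ((ENNReal.ofReal ((2:ℝ)^k))⁻¹ * T⁻¹))
          = (ENNReal.ofReal ((2:ℝ)^k) * (ENNReal.ofReal ((2:ℝ)^k))⁻¹) *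
            ((C₂ ^ q * D) * (σ ^ k * b k ^ q * T⁻¹)) from by ring,
        ENNReal.mul_inv_cancel he0 hetop, one_mul]
    rw [tsum_congr hterm, ENNReal.tsum_mul_left, ENNReal.tsum_mul_right]
    ring
  -- integrate
  calc ∫⁻ t in Ioi (0:ℝ), ENNReal.ofReal (epsMu μ a x t ^ q / t)
      ≤ ∫⁻ t in Ioi (0:ℝ), ∑' k : ℕ,
          (C₂ ^ q * D * σ ^ k * ENNReal.ofReal ((2:ℝ)^k)) * h ((2:ℝ)^k * t) :=
        lintegral_mono_ae ((ae_restrict_iff' measurableSet_Ioi).2 (ae_of_all _ hptB))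
    _ = ∑' k : ℕ, ∫⁻ t in Ioi (0:ℝ),
          (C₂ ^ q * D * σ ^ k * ENNReal.ofReal ((2:ℝ)^k)) * h ((2:ℝ)^k * t) :=
        lintegral_tsum fun k =>
          ((hhm.comp (measurable_const_mul _)).const_mul _).aemeasurable
    _ = ∑' k : ℕ, (C₂ ^ q * D * I) * σ ^ k := by
        apply tsum_congr
        intro k
        have h2k : (0:ℝ) < (2:ℝ)^k := by positivity
        have hck : C₂ ^ q * D * σ ^ k * ENNReal.ofReal ((2:ℝ)^k) ≠ ∞ := by
          apply ENNReal.mul_ne_top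
          apply ENNReal.mul_ne_top
          apply ENNReal.mul_ne_top hC₂q hD
          · exact ENNReal.pow_ne_top (hσ1.trans_le le_top).ne
          · exact ENNReal.ofReal_ne_top
        rw [lintegral_const_mul' _ _ hck, lintegral_Ioi_comp_mul_left hhm h2k, ← hIdef]
        rw [show C₂ ^ q * D * σ ^ k * ENNReal.ofReal ((2:ℝ)^k) *
              (ENNReal.ofReal (((2:ℝ)^k)⁻¹) * I)
            = (ENNReal.ofReal ((2:ℝ)^k) * ENNReal.ofReal (((2:ℝ)^k)⁻¹)) *
              ((C₂ ^ q * D * I) * σ ^ k) from by ring,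
          ← ENNReal.ofReal_mul h2k.le, mul_inv_cancel₀ h2k.ne', ENNReal.ofReal_one, one_mul]
    _ = K * I := by
        rw [ENNReal.tsum_mul_left, ENNReal.tsum_geometric, hKdef]
        ring
    _ ≤ ENNReal.ofReal (K.toReal + 1) * I := mul_le_mul_left hKC _
end

section
/- Let $\mu$ be a finite Borel measure on $\mathbb{C}$ and $0<a<1$. Then there exists a constant $C>0$ depending only on $a$ such that for all $x\in\mathbb{C}$ and $r>0$, $\sum_{k\geq 0} 2^{-k}\,\varepsilon_{\mu,a}(x,2^{k}r)\;\leq\; C\,\varepsilon_{\mu,a}(x,r)$. -/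
open MeasureTheory Metric Set

lemma psi_cont (a : ℝ) (ha : 0 < a) (x : ℂ) (t : ℝ) :
    Continuous (fun y : ℂ => 1 / (‖(y - x) / (t : ℂ)‖ ^ (1 + a) + 1)) := by
  apply Continuous.div continuous_const
  · exact ((continuous_norm.comp (by fun_prop)).rpow_const
      (fun y => Or.inr (by linarith))).add continuous_const
  · intro y; positivity

lemma psi_int (μ : Measure ℂ) [IsFiniteMeasure μ] (a : ℝ) (ha : 0 < a) (x : ℂ) (t : ℝ) :
    Integrable (fun y : ℂ => 1 / (‖(y - x) / (t : ℂ)‖ ^ (1 + a) + 1)) μ := by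
  apply Integrable.mono' (integrable_const (1 : ℝ))
    (psi_cont a ha x t).aestronglyMeasurable
  filter_upwards with y
  rw [Real.norm_eq_abs, abs_of_nonneg (by positivity)]
  rw [div_le_one (by positivity)]
  nlinarith [Real.rpow_nonneg (norm_nonneg ((y - x) / (t : ℂ))) (1 + a)]

lemma epsMu_nonneg (μ : Measure ℂ) (a : ℝ) (x : ℂ) (t : ℝ) (ht : 0 ≤ t) :
    0 ≤ epsMu μ a x t := by
  apply mul_nonneg (by positivity)
  exact integral_nonneg fun y => by positivity

lemma term_bound (a : ℝ) (ha0 : 0 < a) (ha1 : a < 1) (μ : Measure ℂ) [IsFiniteMeasure μ]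
    (x : ℂ) (r : ℝ) (hr : 0 < r) (k : ℕ) :
    (2 : ℝ) ^ (-(k : ℝ)) * epsMu μ a x ((2 : ℝ) ^ k * r)
      ≤ ((2 : ℝ) ^ (a - 1)) ^ k * epsMu μ a x r := by
  set s : ℝ := (2 : ℝ) ^ k with hs
  have hs0 : 0 < s := by positivity
  have hs1 : (1 : ℝ) ≤ s := one_le_pow₀ (by norm_num)
  have hw1 : (1 : ℝ) ≤ s ^ (1 + a) := Real.one_le_rpow hs1 (by linarith)
  -- pointwise bound
  have hpt : ∀ y : ℂ, 1 / (‖(y - x) / ((s * r : ℝ) : ℂ)‖ ^ (1 + a) + 1)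
      ≤ s ^ (1 + a) * (1 / (‖(y - x) / (r : ℂ)‖ ^ (1 + a) + 1)) := by
    intro y
    have hnorm : ‖(y - x) / ((s * r : ℝ) : ℂ)‖ = ‖(y - x) / (r : ℂ)‖ / s := by
      rw [norm_div, norm_div, Complex.norm_real, Complex.norm_real,
        Real.norm_eq_abs, Real.norm_eq_abs, abs_of_pos (mul_pos hs0 hr), abs_of_pos hr]
      rw [div_div, mul_comm]
    rw [hnorm]
    set u : ℝ := ‖(y - x) / (r : ℂ)‖ with hu
    have hu0 : 0 ≤ u := norm_nonneg _
    rw [Real.div_rpow hu0 hs0.le]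
    set v : ℝ := u ^ (1 + a) with hv
    set w : ℝ := s ^ (1 + a) with hw
    have hv0 : 0 ≤ v := Real.rpow_nonneg hu0 _
    have hw0 : 0 < w := by linarith
    have h1 : v / w + 1 = (v + w) / w := by field_simp
    rw [h1, one_div_div]
    calc w / (v + w) ≤ w / (v + 1) := by gcongr
      _ = w * (1 / (v + 1)) := by ring
  have hI : (∫ y, 1 / (‖(y - x) / ((s * r : ℝ) : ℂ)‖ ^ (1 + a) + 1) ∂μ)
      ≤ s ^ (1 + a) * ∫ y, 1 / (‖(y - x) / (r : ℂ)‖ ^ (1 + a) + 1) ∂μ := by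
    rw [← integral_const_mul]
    exact integral_mono_of_nonneg (ae_of_all _ fun y => by positivity)
      ((psi_int μ a ha0 x r).const_mul _) (ae_of_all _ hpt)
  have h2k : (2 : ℝ) ^ (-(k : ℝ)) = s⁻¹ := by
    rw [Real.rpow_neg (by norm_num), Real.rpow_natCast]
  have hq : ((2 : ℝ) ^ (a - 1)) ^ k = s ^ (a - 1) := by
    rw [← Real.rpow_natCast ((2 : ℝ) ^ (a - 1)) k, ← Real.rpow_mul (by norm_num),
      mul_comm, Real.rpow_mul (by norm_num), Real.rpow_natCast]
  have hsa : s ^ (1 + a) = s ^ (a - 1) * s * s := by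
    have h := Real.rpow_add hs0 (a - 1) 2
    have h2 : s ^ (2 : ℝ) = s * s := by
      rw [show (2 : ℝ) = ((2 : ℕ) : ℝ) by norm_num, Real.rpow_natCast]; ring
    rw [show (1 : ℝ) + a = a - 1 + 2 by ring, h, h2]; ring
  set I0 : ℝ := ∫ y, 1 / (‖(y - x) / (r : ℂ)‖ ^ (1 + a) + 1) ∂μ with hI0
  have hI0nn : 0 ≤ I0 := integral_nonneg fun y => by positivity
  calc (2 : ℝ) ^ (-(k : ℝ)) * epsMu μ a x ((2 : ℝ) ^ k * r)
      = s⁻¹ * ((1 / (s * r)) * ∫ y, 1 / (‖(y - x) / ((s * r : ℝ) : ℂ)‖ ^ (1 + a) + 1) ∂μ)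
        := by rw [h2k]; rfl
    _ ≤ s⁻¹ * ((1 / (s * r)) * (s ^ (1 + a) * I0)) := by
        apply mul_le_mul_of_nonneg_left _ (by positivity)
        exact mul_le_mul_of_nonneg_left hI (by positivity)
    _ = ((2 : ℝ) ^ (a - 1)) ^ k * epsMu μ a x r := by
        rw [hq, hsa, epsMu, ← hI0]
        field_simp

/-- For a finite Borel measure `μ` on `ℂ` and `0 < a < 1`, there is
`C > 0` depending only on `a` such that for all `x ∈ ℂ` and `r > 0`,
`∑_{k ≥ 0} 2^{-k} ε_{μ,a}(x, 2^k r) ≤ C ε_{μ,a}(x,r)`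
(the sum over all `k ≥ 0` is expressed via uniformly bounded partial sums). -/
theorem stmt3 (a : ℝ) (ha0 : 0 < a) (ha1 : a < 1) :
    ∃ C : ℝ, 0 < C ∧ ∀ (μ : Measure ℂ), IsFiniteMeasure μ →
      ∀ (x : ℂ) (r : ℝ), 0 < r → ∀ n : ℕ,
        ∑ k ∈ Finset.range n, (2 : ℝ) ^ (-(k : ℝ)) * epsMu μ a x ((2 : ℝ) ^ k * r)
          ≤ C * epsMu μ a x r := by
  set q : ℝ := (2 : ℝ) ^ (a - 1) with hq
  have hq0 : 0 < q := Real.rpow_pos_of_pos (by norm_num) _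
  have hq1 : q < 1 := Real.rpow_lt_one_of_one_lt_of_neg (by norm_num) (by linarith)
  have h1q : 0 < 1 - q := by linarith
  refine ⟨1 / (1 - q), by positivity, fun μ hμ x r hr n => ?_⟩
  have hεnn : 0 ≤ epsMu μ a x r := epsMu_nonneg μ a x r hr.le
  calc ∑ k ∈ Finset.range n, (2 : ℝ) ^ (-(k : ℝ)) * epsMu μ a x ((2 : ℝ) ^ k * r)
      ≤ ∑ k ∈ Finset.range n, q ^ k * epsMu μ a x r :=
        Finset.sum_le_sum fun k _ => term_bound a ha0 ha1 μ x r hr k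
    _ = (∑ k ∈ Finset.range n, q ^ k) * epsMu μ a x r := by rw [Finset.sum_mul]
    _ ≤ (1 / (1 - q)) * epsMu μ a x r := by
        apply mul_le_mul_of_nonneg_right _ hεnn
        have := Summable.sum_le_tsum (Finset.range n) (fun i _ => by positivity)
          (summable_geometric_of_lt_one hq0.le hq1)
        rw [tsum_geometric_of_lt_one hq0.le hq1] at this
        simpa [one_div] using this
end

section
/- Let $\mu$ be a finite Borel measure on $\mathbb{C}$, $a>0$, $b>0$ and $c>1$. Then there is a constant $d>0$ depending only on $a,b,c$ such that whenever a ball $B(x,t)$ satisfies $\varepsilon_{\mu,a}(x,t)\leq b\,\mu(B(x,t))/t$ (i.e. it is $(h_a,b)$-doubling), then $\mu(B(x,ct))\leq d\,\mu(B(x,t))$. -/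
open MeasureTheory Metric Set
open scoped ENNReal

/-- Let `μ` be a finite Borel measure on `ℂ`, `a > 0`, `b > 0`, `c > 1`.
There is `d > 0` depending only on `a, b, c` such that whenever a ball `B(x,t)` is
`(h_a, b)`-doubling, i.e. `ε_{μ,a}(x,t) ≤ b μ(B(x,t))/t`, then
`μ(B(x,ct)) ≤ d μ(B(x,t))`. -/
theorem stmt7 (a b c : ℝ) (ha : 0 < a) (hb : 0 < b) (hc : 1 < c) :
    ∃ d : ℝ, 0 < d ∧ ∀ (μ : Measure ℂ), IsFiniteMeasure μ →
      ∀ (x : ℂ) (t : ℝ), 0 < t →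
        epsMu μ a x t ≤ b * (μ (Metric.closedBall x t)).toReal / t →
        μ (Metric.closedBall x (c * t)) ≤ ENNReal.ofReal d * μ (Metric.closedBall x t) := by
  have hc0 : (0:ℝ) < c := lt_trans one_pos hc
  have hca : (0:ℝ) < c ^ (1 + a) + 1 := by positivity
  refine ⟨b * (c ^ (1 + a) + 1), by positivity, ?_⟩
  intro μ _ x t ht hdoub
  set ψ : ℂ → ℝ := fun y => 1 / (‖(y - x) / (t : ℂ)‖ ^ (1 + a) + 1) with hψ
  have hψcont : Continuous ψ := by
    apply continuous_const.div
    · exact (((continuous_id.sub continuous_const).div_const _).norm.rpow_const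
        (fun y => Or.inr (by positivity))).add continuous_const
    · intro y; positivity
  have hψnonneg : ∀ y, 0 ≤ ψ y := fun y => by positivity
  have hψle : ∀ y, ‖ψ y‖ ≤ 1 := by
    intro y
    rw [Real.norm_of_nonneg (hψnonneg y)]
    rw [hψ]
    apply div_le_one_of_le₀ _ (by positivity)
    have : 0 ≤ ‖(y - x) / (t : ℂ)‖ ^ (1 + a) := by positivity
    linarith
  have hint : Integrable ψ μ :=
    (integrable_const (1:ℝ)).mono' hψcont.aestronglyMeasurable
      (Filter.Eventually.of_forall hψle)
  set S := Metric.closedBall x (c * t)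
  have hψS : ∀ y ∈ S, 1 / (c ^ (1 + a) + 1) ≤ ψ y := by
    intro y hy
    have hdist : dist y x ≤ c * t := mem_closedBall.mp hy
    have hnorm : ‖(y - x) / (t : ℂ)‖ ≤ c := by
      rw [norm_div, Complex.norm_real, Real.norm_of_nonneg ht.le]
      rw [div_le_iff₀ ht]
      simpa [Complex.dist_eq] using hdist
    have hpow : ‖(y - x) / (t : ℂ)‖ ^ (1 + a) ≤ c ^ (1 + a) :=
      Real.rpow_le_rpow (norm_nonneg _) hnorm (by linarith)
    apply one_div_le_one_div_of_le (by positivity)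
    linarith
  have hμS : μ S ≠ ⊤ := measure_ne_top μ S
  have hkey : (1 / (c ^ (1 + a) + 1)) * (μ S).toReal ≤ ∫ y, ψ y ∂μ := by
    calc (1 / (c ^ (1 + a) + 1)) * (μ S).toReal ≤ ∫ y in S, ψ y ∂μ :=
          setIntegral_ge_of_const_le_real measurableSet_closedBall hμS hψS hint.integrableOn
      _ ≤ ∫ y, ψ y ∂μ :=
          setIntegral_le_integral hint (Filter.Eventually.of_forall hψnonneg)
  -- from the doubling hypothesis
  have h1 : (1 / t) * ((1 / (c ^ (1 + a) + 1)) * (μ S).toReal) ≤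
      b * (μ (Metric.closedBall x t)).toReal / t := by
    refine le_trans ?_ hdoub
    rw [epsMu]
    exact mul_le_mul_of_nonneg_left hkey (by positivity)
  have h2 : (μ S).toReal ≤ b * (c ^ (1 + a) + 1) * (μ (Metric.closedBall x t)).toReal := by
    have h1' : (μ S).toReal / (c ^ (1 + a) + 1) / t ≤
        b * (μ (Metric.closedBall x t)).toReal / t := by
      convert h1 using 1
      field_simp
    rw [div_le_div_iff_of_pos_right ht] at h1'
    rw [div_le_iff₀ hca] at h1'
    linarith [h1']
  calc μ S = ENNReal.ofReal (μ S).toReal := (ENNReal.ofReal_toReal hμS).symm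
    _ ≤ ENNReal.ofReal (b * (c ^ (1 + a) + 1) * (μ (Metric.closedBall x t)).toReal) :=
        ENNReal.ofReal_le_ofReal h2
    _ = ENNReal.ofReal (b * (c ^ (1 + a) + 1)) *
          ENNReal.ofReal (μ (Metric.closedBall x t)).toReal :=
        ENNReal.ofReal_mul (by positivity)
    _ = ENNReal.ofReal (b * (c ^ (1 + a) + 1)) * μ (Metric.closedBall x t) := by
        rw [ENNReal.ofReal_toReal (measure_ne_top μ _)]
end
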